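/- arXiv:1103.2776 — 4 statements merged into one kernel-verified Lean document; each statement's English description precedes it below -/
import Mathlib

section
/- Fix an integer N ≥ 2 and set r(i) = N + 1 − i. There exists a unitary operator 𝒰 on (ℂ²)^{⊗N} such that 𝒰 σ^x_1 𝒰* = σ^z_N; 𝒰 σ^x_i 𝒰* = σ^z_{r(i)} σ^z_{r(i)+1} for every i = 2, …, N; 𝒰 σ^z_N 𝒰* = σ^x_1; and 𝒰 (σ^z_i σ^z_{i+1}) 𝒰* = σ^x_{r(i)} for every i = 1, …, N−1. Consequently, for all real h and J, the Hamiltonian H̃(h,J) = h Σ_{i=1}^{N} σ^x_i + J Σ_{i=1}^{N−1} σ^z_i σ^z_{i+1} + J σ^z_N satisfies 𝒰 H̃(h,J) 𝒰* = H̃(J,h); in particular H̃(h,J) and H̃(J,h) have the same characteristic polynomial (the quantum Ising chain with the self-dual boundary term J σ^z_N is exactly self-dual under the exchange h ↔ J for every finite size N). -/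
open Matrix

noncomputable def pauliX : Matrix (Fin 2) (Fin 2) ℂ := !![0, 1; 1, 0]

noncomputable def pauliZ : Matrix (Fin 2) (Fin 2) ℂ := !![1, 0; 0, -1]

/-- The operator acting as the 2×2 matrix `A` on the (1-based) `k`-th tensor factor of
`(ℂ²)^{⊗N} ≅ ℂ^{2^N}` and as the identity on all other factors. -/
noncomputable def siteOp (N : ℕ) (A : Matrix (Fin 2) (Fin 2) ℂ) (k : ℕ) :
    Matrix (Fin N → Fin 2) (Fin N → Fin 2) ℂ :=
  if h : 1 ≤ k ∧ k ≤ N then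
    Matrix.of fun f g =>
      A (f ⟨k - 1, by omega⟩) (g ⟨k - 1, by omega⟩) *
        ∏ j ∈ Finset.univ.erase (⟨k - 1, by omega⟩ : Fin N),
          (if f j = g j then (1 : ℂ) else 0)
  else 1

/-- The quantum Ising chain on `N` sites with the self-dual boundary term `J σ^z_N`:
`H̃(h,J) = h Σ_{i=1}^N σ^x_i + J Σ_{i=1}^{N-1} σ^z_i σ^z_{i+1} + J σ^z_N`. -/
noncomputable def isingSD (N : ℕ) (h J : ℝ) : Matrix (Fin N → Fin 2) (Fin N → Fin 2) ℂ :=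
  (h : ℂ) • ∑ i ∈ Finset.Icc 1 N, siteOp N pauliX i
    + (J : ℂ) • ∑ i ∈ Finset.Icc 1 (N - 1), siteOp N pauliZ i * siteOp N pauliZ (i + 1)
    + (J : ℂ) • siteOp N pauliZ N

namespace IsingSD
open Finset

noncomputable def χ : Fin 2 → ℂ := fun x => if x = 0 then 1 else -1
lemma χ_zero : χ 0 = 1 := rfl
lemma χ_add (x y : Fin 2) : χ (x + y) = χ x * χ y := by
  fin_cases x <;> fin_cases y <;> simp [χ, Fin.ext_iff]
lemma star_χ (x : Fin 2) : star (χ x) = χ x := by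
  fin_cases x <;> simp [χ]
lemma pauliZ_apply (x y : Fin 2) : pauliZ x y = if x = y then χ x else 0 := by
  fin_cases x <;> fin_cases y <;> simp [pauliZ, χ, Fin.ext_iff]
lemma pauliX_apply (x y : Fin 2) : pauliX x y = if x = y + 1 then 1 else 0 := by
  fin_cases x <;> fin_cases y <;> simp [pauliX, Fin.ext_iff]

variable {N : ℕ}

/-- flip the `m`-th bit -/
def flip (m : Fin N) (g : Fin N → Fin 2) : Fin N → Fin 2 := Function.update g m (g m + 1)

lemma flip_apply (m : Fin N) (g : Fin N → Fin 2) (j : Fin N) :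
    flip m g j = if j = m then g m + 1 else g j := Function.update_apply ..

lemma flip_self (m : Fin N) (g : Fin N → Fin 2) : flip m g m = g m + 1 := by
  simp [flip_apply]

lemma flip_ne (m : Fin N) (g : Fin N → Fin 2) {j : Fin N} (h : j ≠ m) : flip m g j = g j := by
  simp [flip_apply, h]

lemma flip_flip (m : Fin N) (g : Fin N → Fin 2) : flip m (flip m g) = g := by
  funext j
  by_cases h : j = m
  · subst h; rw [flip_self, flip_self]
    have : ∀ x : Fin 2, x + 1 + 1 = x := by decide
    exact this _
  · rw [flip_ne _ _ h, flip_ne _ _ h]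

lemma siteZ_eq (k : ℕ) (h1 : 1 ≤ k) (h2 : k ≤ N) :
    siteOp N pauliZ k = Matrix.of fun f g =>
      if f = g then χ (g ⟨k - 1, by omega⟩) else 0 := by
  rw [siteOp, dif_pos ⟨h1, h2⟩]
  ext f g
  simp only [Matrix.of_apply, pauliZ_apply]
  by_cases hfg : f = g
  · subst hfg
    rw [if_pos rfl, if_pos rfl, Finset.prod_eq_one (fun j _ => if_pos rfl), mul_one]
  · rw [if_neg hfg]
    by_cases hk : f ⟨k - 1, by omega⟩ = g ⟨k - 1, by omega⟩
    · obtain ⟨j, hj⟩ := Function.ne_iff.mp hfg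
      have hjk : j ≠ ⟨k - 1, by omega⟩ := by rintro rfl; exact hj hk
      rw [Finset.prod_eq_zero (Finset.mem_erase.mpr ⟨hjk, Finset.mem_univ j⟩)
        (if_neg hj : (if f j = g j then (1:ℂ) else 0) = 0), mul_zero]
    · rw [if_neg hk, zero_mul]

lemma siteX_eq (k : ℕ) (h1 : 1 ≤ k) (h2 : k ≤ N) :
    siteOp N pauliX k = Matrix.of fun f g =>
      if f = flip ⟨k - 1, by omega⟩ g then 1 else 0 := by
  rw [siteOp, dif_pos ⟨h1, h2⟩]
  ext f g
  simp only [Matrix.of_apply, pauliX_apply]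
  by_cases hfg : f = flip ⟨k - 1, by omega⟩ g
  · subst hfg
    rw [if_pos (flip_self _ _), if_pos rfl,
      Finset.prod_eq_one (fun j hj => if_pos (flip_ne _ _ (Finset.mem_erase.mp hj).1)), mul_one]
  · rw [if_neg hfg]
    by_cases hk : f ⟨k - 1, by omega⟩ = g ⟨k - 1, by omega⟩ + 1
    · have : ∃ j, j ≠ (⟨k - 1, by omega⟩ : Fin N) ∧ f j ≠ g j := by
        by_contra hcon
        push_neg at hcon
        apply hfg
        funext j
        by_cases hj : j = (⟨k - 1, by omega⟩ : Fin N)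
        · subst hj; rw [flip_self]; exact hk
        · rw [flip_ne _ _ hj]; exact hcon j hj
      obtain ⟨j, hjk, hj⟩ := this
      rw [Finset.prod_eq_zero (Finset.mem_erase.mpr ⟨hjk, Finset.mem_univ j⟩)
        (if_neg hj : (if f j = g j then (1:ℂ) else 0) = 0), mul_zero]
    · rw [if_neg hk, zero_mul]


/-- bits of `f` extended by `0` beyond `N` -/
def Ebit (N : ℕ) (f : Fin N → Fin 2) : ℕ → Fin 2 := fun j => if h : j < N then f ⟨j, h⟩ else 0

/-- the `F₂`-linear map `f_j ↦ f_j + f_{j+1}` -/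
def abit (N : ℕ) (f : Fin N → Fin 2) : Fin N → Fin 2 :=
  fun j => Ebit N f j.val + Ebit N f (j.val + 1)

/-- the quadratic exponent of the duality matrix -/
def Q (N : ℕ) (f g : Fin N → Fin 2) : Fin 2 := ∑ j, abit N f j * g (Fin.rev j)

noncomputable def cU (N : ℕ) : ℂ := (((Real.sqrt 2)⁻¹ : ℝ) ^ N : ℝ)

/-- the Kramers-Wannier duality unitary -/
noncomputable def Umat (N : ℕ) : Matrix (Fin N → Fin 2) (Fin N → Fin 2) ℂ :=
  Matrix.of fun f g => cU N * χ (Q N f g)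

lemma Ebit_lt (f : Fin N → Fin 2) {t : ℕ} (h : t < N) : Ebit N f t = f ⟨t, h⟩ := dif_pos h
lemma Ebit_ge (f : Fin N → Fin 2) {t : ℕ} (h : ¬ t < N) : Ebit N f t = 0 := dif_neg h

/- multiplication entry lemmas -/

lemma mulZ_right (M : Matrix (Fin N → Fin 2) (Fin N → Fin 2) ℂ) (k : ℕ)
    (h1 : 1 ≤ k) (h2 : k ≤ N) (f g : Fin N → Fin 2) :
    (M * siteOp N pauliZ k) f g = M f g * χ (g ⟨k - 1, by omega⟩) := by
  rw [siteZ_eq k h1 h2, Matrix.mul_apply]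
  simp only [Matrix.of_apply, mul_ite, mul_zero]
  rw [Finset.sum_ite_eq' Finset.univ g (fun h => M f h * χ (g ⟨k - 1, by omega⟩)),
    if_pos (Finset.mem_univ g)]

lemma mulZ_left (M : Matrix (Fin N → Fin 2) (Fin N → Fin 2) ℂ) (k : ℕ)
    (h1 : 1 ≤ k) (h2 : k ≤ N) (f g : Fin N → Fin 2) :
    (siteOp N pauliZ k * M) f g = χ (f ⟨k - 1, by omega⟩) * M f g := by
  rw [siteZ_eq k h1 h2, Matrix.mul_apply]
  simp only [Matrix.of_apply, ite_mul, zero_mul]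
  have : ∀ h : Fin N → Fin 2, (if f = h then χ (h ⟨k - 1, by omega⟩) * M h g else 0)
      = if h = f then χ (f ⟨k - 1, by omega⟩) * M f g else 0 := by
    intro h
    by_cases hh : h = f
    · subst hh; simp
    · rw [if_neg (fun hc => hh hc.symm), if_neg hh]
  rw [Finset.sum_congr rfl (fun h _ => this h),
    Finset.sum_ite_eq' Finset.univ f (fun _ => χ (f ⟨k - 1, by omega⟩) * M f g),
    if_pos (Finset.mem_univ f)]

lemma mulX_right (M : Matrix (Fin N → Fin 2) (Fin N → Fin 2) ℂ) (k : ℕ)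
    (h1 : 1 ≤ k) (h2 : k ≤ N) (f g : Fin N → Fin 2) :
    (M * siteOp N pauliX k) f g = M f (flip ⟨k - 1, by omega⟩ g) := by
  rw [siteX_eq k h1 h2, Matrix.mul_apply]
  simp only [Matrix.of_apply, mul_ite, mul_zero, mul_one]
  rw [Finset.sum_ite_eq' Finset.univ (flip ⟨k - 1, by omega⟩ g) (fun h => M f h),
    if_pos (Finset.mem_univ _)]

lemma mulX_left (M : Matrix (Fin N → Fin 2) (Fin N → Fin 2) ℂ) (k : ℕ)
    (h1 : 1 ≤ k) (h2 : k ≤ N) (f g : Fin N → Fin 2) :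
    (siteOp N pauliX k * M) f g = M (flip ⟨k - 1, by omega⟩ f) g := by
  rw [siteX_eq k h1 h2, Matrix.mul_apply]
  simp only [Matrix.of_apply, ite_mul, zero_mul, one_mul]
  have : ∀ h : Fin N → Fin 2, (if f = flip ⟨k - 1, by omega⟩ h then M h g else 0)
      = if h = flip ⟨k - 1, by omega⟩ f then M (flip ⟨k - 1, by omega⟩ f) g else 0 := by
    intro h
    by_cases hh : h = flip ⟨k - 1, by omega⟩ f
    · subst hh; rw [if_pos (flip_flip _ _).symm, if_pos rfl]
    · rw [if_neg, if_neg hh]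
      intro hc
      exact hh (by rw [hc, flip_flip])
  rw [Finset.sum_congr rfl (fun h _ => this h),
    Finset.sum_ite_eq' Finset.univ (flip ⟨k - 1, by omega⟩ f) _,
    if_pos (Finset.mem_univ _)]

/- behaviour of Q under bit flips -/

lemma Q_flip_right (f g : Fin N → Fin 2) (m : Fin N) :
    Q N f (flip m g) = Q N f g + abit N f (Fin.rev m) := by
  unfold Q
  have key : ∀ j : Fin N, abit N f j * flip m g (Fin.rev j)
      = abit N f j * g (Fin.rev j) + (if j = Fin.rev m then abit N f (Fin.rev m) else 0) := by
    intro j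
    by_cases hj : j = Fin.rev m
    · subst hj
      rw [if_pos rfl, Fin.rev_rev, flip_self, mul_add, mul_one]
    · rw [if_neg hj, add_zero, flip_ne]
      intro hc
      exact hj (by rw [← hc, Fin.rev_rev])
  rw [Finset.sum_congr rfl (fun j _ => key j), Finset.sum_add_distrib,
    Finset.sum_ite_eq' Finset.univ (Fin.rev m) (fun _ => abit N f (Fin.rev m)),
    if_pos (Finset.mem_univ _)]

lemma Ebit_flip (f : Fin N → Fin 2) (m : Fin N) (t : ℕ) :
    Ebit N (flip m f) t = Ebit N f t + (if t = m.val then 1 else 0) := by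
  by_cases h : t < N
  · rw [Ebit_lt _ h, Ebit_lt _ h, flip_apply]
    by_cases ht : t = m.val
    · have : (⟨t, h⟩ : Fin N) = m := Fin.ext ht
      rw [if_pos this, if_pos ht, this]
    · rw [if_neg (fun hc => ht (congrArg Fin.val hc)), if_neg ht, add_zero]
  · rw [Ebit_ge _ h, Ebit_ge _ h, if_neg (by have := m.isLt; omega), add_zero]

lemma abit_flip (f : Fin N → Fin 2) (m : Fin N) (j : Fin N) :
    abit N (flip m f) j = abit N f j
      + ((if j = m then 1 else 0) + (if j.val + 1 = m.val then 1 else 0)) := by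
  unfold abit
  rw [Ebit_flip, Ebit_flip]
  have : (if j.val = m.val then (1 : Fin 2) else 0) = if j = m then 1 else 0 := by
    by_cases h : j = m
    · rw [if_pos (congrArg Fin.val h), if_pos h]
    · rw [if_neg (fun hc => h (Fin.ext hc)), if_neg h]
  rw [this]; abel

def T (m : Fin N) (g : Fin N → Fin 2) : Fin 2 :=
  ∑ j, (if j.val + 1 = m.val then 1 else 0) * g (Fin.rev j)

lemma Q_flip_left (f g : Fin N → Fin 2) (m : Fin N) :
    Q N (flip m f) g = Q N f g + (g (Fin.rev m) + T m g) := by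
  unfold Q T
  have key : ∀ j : Fin N, abit N (flip m f) j * g (Fin.rev j)
      = abit N f j * g (Fin.rev j) + ((if j = m then g (Fin.rev m) else 0)
        + (if j.val + 1 = m.val then (1 : Fin 2) else 0) * g (Fin.rev j)) := by
    intro j
    rw [abit_flip, add_mul, add_mul, ite_mul, zero_mul, one_mul]
    congr 2
    by_cases hj : j = m
    · subst hj; simp
    · rw [if_neg hj, if_neg hj]
  rw [Finset.sum_congr rfl (fun j _ => key j), Finset.sum_add_distrib,
    Finset.sum_add_distrib,
    Finset.sum_ite_eq' Finset.univ m (fun _ => g (Fin.rev m)), if_pos (Finset.mem_univ _)]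

lemma T_zero (m : Fin N) (g : Fin N → Fin 2) (h : m.val = 0) : T m g = 0 := by
  unfold T
  refine Finset.sum_eq_zero fun j _ => ?_
  rw [if_neg (by omega), zero_mul]

lemma T_succ (m t : Fin N) (g : Fin N → Fin 2) (h : t.val + 1 = m.val) :
    T m g = g (Fin.rev t) := by
  unfold T
  have key : ∀ j : Fin N, (if j.val + 1 = m.val then (1 : Fin 2) else 0) * g (Fin.rev j)
      = if j = t then g (Fin.rev t) else 0 := by
    intro j
    by_cases hj : j = t
    · subst hj; rw [if_pos h, one_mul, if_pos rfl]
    · rw [if_neg, zero_mul, if_neg hj]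
      intro hc
      exact hj (Fin.ext (by omega))
  rw [Finset.sum_congr rfl (fun j _ => key j),
    Finset.sum_ite_eq' Finset.univ t (fun _ => g (Fin.rev t)), if_pos (Finset.mem_univ _)]


lemma Umat_apply (f g : Fin N → Fin 2) : Umat N f g = cU N * χ (Q N f g) := rfl

lemma Ebit_congr (f : Fin N → Fin 2) {s t : ℕ} (h : s = t) : Ebit N f s = Ebit N f t := by rw [h]

lemma abit_rev_mk (f : Fin N → Fin 2) (i : ℕ) (h1 : 1 ≤ i) (h2 : i ≤ N) :
    abit N f (Fin.rev ⟨i - 1, by omega⟩) = Ebit N f (N - i) + Ebit N f (N - i + 1) := by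
  have : abit N f (Fin.rev ⟨i - 1, by omega⟩)
      = Ebit N f (N - (i - 1 + 1)) + Ebit N f (N - (i - 1 + 1) + 1) := rfl
  rw [this]
  exact congrArg₂ (· + ·) (Ebit_congr f (by omega)) (Ebit_congr f (by omega))

lemma U_X1 (hN : 2 ≤ N) :
    Umat N * siteOp N pauliX 1 = siteOp N pauliZ N * Umat N := by
  ext f g
  rw [mulX_right _ 1 le_rfl (by omega), mulZ_left _ N (by omega) le_rfl,
    Umat_apply, Umat_apply, Q_flip_right, abit_rev_mk f 1 le_rfl (by omega),
    Ebit_ge f (by omega : ¬ N - 1 + 1 < N), add_zero,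
    Ebit_lt f (by omega : N - 1 < N), χ_add]
  ring

lemma U_Xi (i : ℕ) (h2 : 2 ≤ i) (hiN : i ≤ N) :
    Umat N * siteOp N pauliX i
      = siteOp N pauliZ (N + 1 - i) * (siteOp N pauliZ (N + 1 - i + 1) * Umat N) := by
  ext f g
  rw [mulX_right _ i (by omega) hiN, mulZ_left _ (N + 1 - i) (by omega) (by omega),
    mulZ_left _ (N + 1 - i + 1) (by omega) (by omega),
    Umat_apply, Umat_apply, Q_flip_right, abit_rev_mk f i (by omega) hiN,
    ← Ebit_lt f (by omega : N + 1 - i - 1 < N), ← Ebit_lt f (by omega : N + 1 - i + 1 - 1 < N),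
    Ebit_congr f (by omega : N + 1 - i - 1 = N - i),
    Ebit_congr f (by omega : N + 1 - i + 1 - 1 = N - i + 1), χ_add, χ_add]
  ring

lemma U_ZN (hN : 2 ≤ N) :
    Umat N * siteOp N pauliZ N = siteOp N pauliX 1 * Umat N := by
  ext f g
  rw [mulZ_right _ N (by omega) le_rfl, mulX_left _ 1 le_rfl (by omega),
    Umat_apply, Umat_apply, Q_flip_left, T_zero _ _ rfl, add_zero]
  have hrev : g (Fin.rev (⟨1 - 1, by omega⟩ : Fin N)) = g ⟨N - 1, by omega⟩ :=
    congrArg g (Fin.ext (by simp only [Fin.val_rev, Fin.val_mk] <;> omega))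
  rw [hrev, χ_add]
  ring

lemma U_ZZ (hN : 2 ≤ N) (i : ℕ) (h1 : 1 ≤ i) (h2 : i ≤ N - 1) :
    Umat N * (siteOp N pauliZ i * siteOp N pauliZ (i + 1))
      = siteOp N pauliX (N + 1 - i) * Umat N := by
  ext f g
  rw [← mul_assoc, mulZ_right _ (i + 1) (by omega) (by omega),
    mulZ_right _ i h1 (by omega), mulX_left _ (N + 1 - i) (by omega) (by omega),
    Umat_apply, Umat_apply, Q_flip_left,
    T_succ (⟨N + 1 - i - 1, by omega⟩ : Fin N) (⟨N - i - 1, by omega⟩ : Fin N) g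
      (by simp only [Fin.val_mk]; omega)]
  have e1 : g (Fin.rev (⟨N + 1 - i - 1, by omega⟩ : Fin N)) = g ⟨i - 1, by omega⟩ :=
    congrArg g (Fin.ext (by simp only [Fin.val_rev, Fin.val_mk] <;> omega))
  have e2 : g (Fin.rev (⟨N - i - 1, by omega⟩ : Fin N)) = g ⟨i + 1 - 1, by omega⟩ :=
    congrArg g (Fin.ext (by simp only [Fin.val_rev, Fin.val_mk] <;> omega))
  rw [e1, e2, χ_add, χ_add]
  ring


lemma χ_sum {ι : Type*} (s : Finset ι) (v : ι → Fin 2) :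
    χ (∑ j ∈ s, v j) = ∏ j ∈ s, χ (v j) := by
  classical
  induction s using Finset.cons_induction with
  | empty => simp [χ_zero]
  | cons a s ha ih => rw [Finset.sum_cons, Finset.prod_cons, χ_add, ih]

lemma χ_pair (u : Fin 2) : ∑ x : Fin 2, χ (u * x) = if u = 0 then 2 else 0 := by
  fin_cases u <;> simp [Fin.sum_univ_two, χ] <;> norm_num

lemma star_cU : star (cU N) = cU N := by
  rw [cU, Complex.star_def, Complex.conj_ofReal]

lemma cU_sq : cU N * cU N * 2 ^ N = 1 := by
  rw [cU]
  have : ((Real.sqrt 2)⁻¹ ^ N : ℝ) * ((Real.sqrt 2)⁻¹ ^ N : ℝ) * 2 ^ N = 1 := by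
    rw [← mul_pow, ← mul_pow]; conv_rhs => rw [← one_pow N]
    congr 1
    rw [← mul_inv, Real.mul_self_sqrt (by norm_num : (0:ℝ) ≤ 2)]
    norm_num
  calc (((Real.sqrt 2)⁻¹ ^ N : ℝ) : ℂ) * (((Real.sqrt 2)⁻¹ ^ N : ℝ) : ℂ) * 2 ^ N
      = ((((Real.sqrt 2)⁻¹ ^ N) * ((Real.sqrt 2)⁻¹ ^ N) * 2 ^ N : ℝ) : ℂ) := by push_cast; ring
    _ = 1 := by rw [this, Complex.ofReal_one]

lemma Ebit_eq_of_abit_eq {f f' : Fin N → Fin 2} (h : abit N f = abit N f') :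
    ∀ d t, N ≤ t + d → Ebit N f t = Ebit N f' t := by
  intro d
  induction d with
  | zero => intro t ht; rw [Ebit_ge f (by omega), Ebit_ge f' (by omega)]
  | succ d ih =>
    intro t ht
    by_cases hlt : t < N
    · have h1 : Ebit N f (t + 1) = Ebit N f' (t + 1) := ih (t + 1) (by omega)
      have h2 : Ebit N f t + Ebit N f (t + 1) = Ebit N f' t + Ebit N f' (t + 1) :=
        congrFun h ⟨t, hlt⟩
      rw [h1] at h2
      exact add_right_cancel h2
    · rw [Ebit_ge f hlt, Ebit_ge f' hlt]

lemma abit_inj {f f' : Fin N → Fin 2} (h : abit N f = abit N f') : f = f' := by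
  funext j
  have := Ebit_eq_of_abit_eq h N j.val (by omega)
  rw [Ebit_lt f j.isLt, Ebit_lt f' j.isLt] at this
  exact this

lemma U_mul_star : Umat N * (Umat N)ᴴ = 1 := by
  ext f f'
  rw [Matrix.mul_apply, Matrix.one_apply]
  set u : Fin N → Fin 2 := fun j => abit N f j + abit N f' j with hu
  have term : ∀ g, Umat N f g * (Umat N)ᴴ g f'
      = cU N * cU N * ∏ j, χ (u (Fin.rev j) * g j) := by
    intro g
    rw [Matrix.conjTranspose_apply, Umat_apply, Umat_apply, star_mul', star_cU, star_χ]
    have hQ : Q N f g + Q N f' g = ∑ j, u (Fin.rev j) * g j := by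
      rw [Q, Q, ← Finset.sum_add_distrib]
      refine Fintype.sum_bijective Fin.rev Fin.rev_bijective _ _ fun j => ?_
      rw [Fin.rev_rev, hu]
      exact (add_mul _ _ _).symm
    calc cU N * χ (Q N f g) * (cU N * χ (Q N f' g))
        = cU N * cU N * (χ (Q N f g) * χ (Q N f' g)) := by ring
      _ = cU N * cU N * χ (Q N f g + Q N f' g) := by rw [χ_add]
      _ = cU N * cU N * ∏ j, χ (u (Fin.rev j) * g j) := by rw [hQ, χ_sum]
  rw [Finset.sum_congr rfl fun g _ => term g, ← Finset.mul_sum,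
    ← Fintype.prod_sum fun j x => χ (u (Fin.rev j) * x)]
  by_cases hff : f = f'
  · subst hff
    rw [if_pos rfl]
    have hu0 : ∀ j : Fin N, u j = 0 := by
      intro j
      have : ∀ x : Fin 2, x + x = 0 := by decide
      exact this _
    rw [Finset.prod_congr rfl fun j _ => by rw [hu0 (Fin.rev j), χ_pair, if_pos rfl]]
    rw [Finset.prod_const, Finset.card_univ, Fintype.card_fin]
    exact_mod_cast cU_sq
  · rw [if_neg hff]
    have : ∃ j, u j ≠ 0 := by
      by_contra hcon
      push_neg at hcon
      apply hff
      apply abit_inj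
      funext j
      have hx : ∀ x y : Fin 2, x + y = 0 → x = y := by decide
      exact hx _ _ (hcon j)
    obtain ⟨j0, hj0⟩ := this
    rw [Finset.prod_eq_zero (Finset.mem_univ (Fin.rev j0)), mul_zero]
    rw [χ_pair, Fin.rev_rev, if_neg hj0]


lemma charpoly_conj {n : Type*} [Fintype n] [DecidableEq n] (U V M : Matrix n n ℂ)
    (hUV : U * V = 1) : (U * M * V).charpoly = M.charpoly := by
  set F := (Polynomial.C : ℂ →+* Polynomial ℂ).mapMatrix (m := n) with hF
  have hmap : F U * F V = 1 := by rw [← _root_.map_mul, hUV, _root_.map_one]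
  have key : charmatrix (U * M * V) = F U * charmatrix M * F V := by
    rw [charmatrix, charmatrix, Matrix.mul_sub, Matrix.sub_mul]
    congr 1
    · rw [← (Matrix.scalar_commute (Polynomial.X : Polynomial ℂ)
        (fun r' => Commute.all _ _) (F U)).eq, mul_assoc, hmap, mul_one]
    · show F (U * M * V) = F U * F M * F V
      rw [_root_.map_mul, _root_.map_mul]
  unfold Matrix.charpoly
  rw [key, Matrix.det_mul, Matrix.det_mul]
  have : (F U).det * (charmatrix M).det * (F V).det
      = (charmatrix M).det * ((F U).det * (F V).det) := by ring
  rw [this, ← Matrix.det_mul, hmap, Matrix.det_one, mul_one]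

lemma conj_eq (A B : Matrix (Fin N → Fin 2) (Fin N → Fin 2) ℂ)
    (hAB : Umat N * A = B * Umat N) : Umat N * A * (Umat N)ᴴ = B := by
  rw [hAB, mul_assoc, U_mul_star, mul_one]

lemma H_conj (hN : 2 ≤ N) (h J : ℝ) :
    Umat N * isingSD N h J * (Umat N)ᴴ = isingSD N J h := by
  have hsplit : Finset.Icc 1 N = insert 1 (Finset.Icc 2 N) := by
    ext x; simp only [Finset.mem_Icc, Finset.mem_insert]; omega
  have h1n : (1 : ℕ) ∉ Finset.Icc 2 N := by simp
  rw [isingSD, isingSD, hsplit]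
  simp only [Matrix.mul_add, Matrix.add_mul, mul_smul_comm, smul_mul_assoc,
    Finset.mul_sum, Finset.sum_mul, Finset.sum_insert h1n]
  have C1 : Umat N * siteOp N pauliX 1 * (Umat N)ᴴ = siteOp N pauliZ N :=
    conj_eq _ _ (U_X1 hN)
  have C2 : ∀ i ∈ Finset.Icc 2 N, Umat N * siteOp N pauliX i * (Umat N)ᴴ
      = (fun i => siteOp N pauliZ i * siteOp N pauliZ (i + 1)) (N + 1 - i) := by
    intro i hi
    rw [Finset.mem_Icc] at hi
    exact conj_eq _ _ (by rw [U_Xi i hi.1 hi.2, ← mul_assoc])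
  have C3 : Umat N * siteOp N pauliZ N * (Umat N)ᴴ = siteOp N pauliX 1 :=
    conj_eq _ _ (U_ZN hN)
  have C4 : ∀ i ∈ Finset.Icc 1 (N - 1),
      Umat N * (siteOp N pauliZ i * siteOp N pauliZ (i + 1)) * (Umat N)ᴴ
        = (fun i => siteOp N pauliX i) (N + 1 - i) := by
    intro i hi
    rw [Finset.mem_Icc] at hi
    exact conj_eq _ _ (U_ZZ hN i hi.1 hi.2)
  rw [C1, C3, Finset.sum_congr rfl C2, Finset.sum_congr rfl C4]
  have E1 : ∑ i ∈ Finset.Icc 2 N,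
      (fun i => siteOp N pauliZ i * siteOp N pauliZ (i + 1)) (N + 1 - i)
      = ∑ i ∈ Finset.Icc 1 (N - 1), siteOp N pauliZ i * siteOp N pauliZ (i + 1) := by
    refine Finset.sum_nbij' (fun a => N + 1 - a) (fun a => N + 1 - a) ?_ ?_ ?_ ?_ ?_ <;>
      intro a ha <;> simp only [Finset.mem_Icc] at * <;> try omega
  have E2 : ∑ i ∈ Finset.Icc 1 (N - 1), (fun i => siteOp N pauliX i) (N + 1 - i)
      = ∑ i ∈ Finset.Icc 2 N, siteOp N pauliX i := by
    refine Finset.sum_nbij' (fun a => N + 1 - a) (fun a => N + 1 - a) ?_ ?_ ?_ ?_ ?_ <;>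
      intro a ha <;> simp only [Finset.mem_Icc] at * <;> try omega
  rw [E1, E2]
  simp only [smul_add]
  abel

end IsingSD

open IsingSD in
theorem ising_chain_exact_selfduality (N : ℕ) (hN : 2 ≤ N) :
    ∃ U : Matrix (Fin N → Fin 2) (Fin N → Fin 2) ℂ,
      U ∈ Matrix.unitaryGroup (Fin N → Fin 2) ℂ ∧
      U * siteOp N pauliX 1 * Uᴴ = siteOp N pauliZ N ∧
      (∀ i : ℕ, 2 ≤ i → i ≤ N →
        U * siteOp N pauliX i * Uᴴ =
          siteOp N pauliZ (N + 1 - i) * siteOp N pauliZ (N + 1 - i + 1)) ∧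
      U * siteOp N pauliZ N * Uᴴ = siteOp N pauliX 1 ∧
      (∀ i : ℕ, 1 ≤ i → i ≤ N - 1 →
        U * (siteOp N pauliZ i * siteOp N pauliZ (i + 1)) * Uᴴ
          = siteOp N pauliX (N + 1 - i)) ∧
      (∀ h J : ℝ, U * isingSD N h J * Uᴴ = isingSD N J h) ∧
      (∀ h J : ℝ, (isingSD N h J).charpoly = (isingSD N J h).charpoly) := by
  refine ⟨Umat N, ?_, ?_, ?_, ?_, ?_, ?_, ?_⟩
  · exact Matrix.mem_unitaryGroup_iff.mpr
      (by rw [Matrix.star_eq_conjTranspose]; exact U_mul_star)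
  · exact conj_eq _ _ (U_X1 hN)
  · intro i h2i hiN
    exact conj_eq _ _ (by rw [U_Xi i h2i hiN, ← mul_assoc])
  · exact conj_eq _ _ (U_ZN hN)
  · intro i h1i hiN
    exact conj_eq _ _ (U_ZZ hN i h1i hiN)
  · exact H_conj hN
  · intro h J
    rw [← H_conj hN h J, charpoly_conj _ _ _ U_mul_star]
end

section
/- Fix an integer N ≥ 2 and set r(i) = N + 1 − i. On (ℂ²)^{⊗N} define the dual (disorder) variables μ^x_1 = σ^z_N, μ^x_i = σ^z_{r(i)} σ^z_{r(i)+1} for i = 2, …, N, and μ^z_i = ∏_{m=1}^{r(i)} σ^x_m for i = 1, …, N. Then these operators satisfy the same Pauli algebra as the original spins: (μ^x_i)² = 1 = (μ^z_i)², μ^x_i μ^z_i = − μ^z_i μ^x_i for every i, and for i ≠ j every one of μ^x_i, μ^z_i commutes with every one of μ^x_j, μ^z_j. -/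
open Matrix

/-- The dual (disorder) variable `μ^x_i` of the finite quantum Ising chain:
`μ^x_1 = σ^z_N` and `μ^x_i = σ^z_{r(i)} σ^z_{r(i)+1}` for `2 ≤ i ≤ N`, with `r(i) = N+1-i`. -/
noncomputable def muX (N i : ℕ) : Matrix (Fin N → Fin 2) (Fin N → Fin 2) ℂ :=
  if i = 1 then siteOp N pauliZ N
  else siteOp N pauliZ (N + 1 - i) * siteOp N pauliZ (N + 1 - i + 1)

/-- The dual (disorder) variable `μ^z_i = ∏_{m=1}^{r(i)} σ^x_m`, with `r(i) = N+1-i`. -/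
noncomputable def muZ (N i : ℕ) : Matrix (Fin N → Fin 2) (Fin N → Fin 2) ℂ :=
  ((List.range (N + 1 - i)).map fun m => siteOp N pauliX (m + 1)).prod

section core
variable {N : ℕ}

lemma sum_update (f : Fin N → Fin 2) (k : Fin N) (F : (Fin N → Fin 2) → ℂ)
    (hF : ∀ h : Fin N → Fin 2, h ≠ Function.update f k (h k) → F h = 0) :
    ∑ h, F h = ∑ v, F (Function.update f k v) := by
  classical
  have hinj : Function.Injective (Function.update f k) := by
    intro v w hvw
    have := congrFun hvw k
    simpa using this
  rw [show (∑ v, F (Function.update f k v))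
      = ∑ h ∈ Finset.univ.image (Function.update f k), F h from
    (Finset.sum_image (fun x _ y _ h => hinj h)).symm]
  symm
  apply Finset.sum_subset (Finset.subset_univ _)
  intro h _ hmem
  apply hF
  intro he
  apply hmem
  rw [he]
  exact Finset.mem_image_of_mem _ (Finset.mem_univ _)

lemma siteOp_apply (A : Matrix (Fin 2) (Fin 2) ℂ) (k : ℕ) (hk1 : 1 ≤ k) (hk2 : k ≤ N)
    (f g : Fin N → Fin 2) :
    siteOp N A k f g =
      A (f ⟨k - 1, by omega⟩) (g ⟨k - 1, by omega⟩) *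
        (if ∀ j ∈ Finset.univ.erase (⟨k - 1, by omega⟩ : Fin N), f j = g j
          then (1:ℂ) else 0) := by
  rw [siteOp, dif_pos ⟨hk1, hk2⟩]
  simp [Finset.prod_boole]

lemma siteOp_mul_same (A B : Matrix (Fin 2) (Fin 2) ℂ) (k : ℕ) (hk1 : 1 ≤ k) (hk2 : k ≤ N) :
    siteOp N A k * siteOp N B k = siteOp N (A * B) k := by
  classical
  ext f g
  set k' : Fin N := ⟨k - 1, by omega⟩ with hk'
  rw [Matrix.mul_apply]
  simp only [siteOp_apply _ _ hk1 hk2, ← hk']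
  rw [sum_update f k']
  · have hupd : ∀ v : Fin 2, ∀ j ∈ Finset.univ.erase k',
        Function.update f k' v j = f j := by
      intro v j hj
      exact Function.update_of_ne (Finset.ne_of_mem_erase hj) _ _
    have h1 : ∀ v : Fin 2,
        (if ∀ j ∈ Finset.univ.erase k', f j = Function.update f k' v j then (1:ℂ) else 0) = 1 := by
      intro v
      rw [if_pos]
      intro j hj
      exact (hupd v j hj).symm
    have h2 : ∀ v : Fin 2,
        (if ∀ j ∈ Finset.univ.erase k', Function.update f k' v j = g j then (1:ℂ) else 0)
          = (if ∀ j ∈ Finset.univ.erase k', f j = g j then (1:ℂ) else 0) := by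
      intro v
      apply if_congr _ rfl rfl
      constructor
      · intro hc j hj; rw [← hupd v j hj]; exact hc j hj
      · intro hc j hj; rw [hupd v j hj]; exact hc j hj
    simp only [Function.update_self, h1, mul_one, h2]
    rw [Matrix.mul_apply, Finset.sum_mul]
    apply Finset.sum_congr rfl
    intro v _
    ring
  · intro h hne
    have : ∃ j ∈ Finset.univ.erase k', f j ≠ h j := by
      by_contra hc
      push_neg at hc
      apply hne
      funext j
      rcases eq_or_ne j k' with rfl | hj
      · simp
      · rw [Function.update_of_ne hj]
        exact (hc j (Finset.mem_erase.mpr ⟨hj, Finset.mem_univ _⟩)).symm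
    obtain ⟨j, hj, hfj⟩ := this
    rw [if_neg, mul_zero, zero_mul]
    intro hall
    exact hfj (hall j hj)

lemma siteOp_mul_apply_ne (A B : Matrix (Fin 2) (Fin 2) ℂ) (k l : ℕ)
    (hk1 : 1 ≤ k) (hk2 : k ≤ N) (hl1 : 1 ≤ l) (hl2 : l ≤ N) (hkl : k ≠ l)
    (f g : Fin N → Fin 2) :
    (siteOp N A k * siteOp N B l) f g =
      A (f ⟨k - 1, by omega⟩) (g ⟨k - 1, by omega⟩) *
      B (f ⟨l - 1, by omega⟩) (g ⟨l - 1, by omega⟩) *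
      (if ∀ j ∈ (Finset.univ.erase (⟨l - 1, by omega⟩ : Fin N)).erase
          (⟨k - 1, by omega⟩ : Fin N), f j = g j then (1:ℂ) else 0) := by
  classical
  set k' : Fin N := ⟨k - 1, by omega⟩ with hk'
  set l' : Fin N := ⟨l - 1, by omega⟩ with hl'
  have hk'l' : k' ≠ l' := by
    simp only [hk', hl', ne_eq, Fin.mk.injEq]
    omega
  rw [Matrix.mul_apply]
  simp only [siteOp_apply _ _ hk1 hk2, siteOp_apply _ _ hl1 hl2, ← hk', ← hl']
  rw [sum_update f k']
  · have hupd : ∀ v : Fin 2, ∀ j : Fin N, j ≠ k' →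
        Function.update f k' v j = f j := fun v j hj => Function.update_of_ne hj _ _
    have h1 : ∀ v : Fin 2,
        (if ∀ j ∈ Finset.univ.erase k', f j = Function.update f k' v j then (1:ℂ) else 0) = 1 := by
      intro v
      rw [if_pos]
      intro j hj
      exact (hupd v j (Finset.ne_of_mem_erase hj)).symm
    have h2 : ∀ v : Fin 2,
        (if ∀ j ∈ Finset.univ.erase l', Function.update f k' v j = g j then (1:ℂ) else 0)
        = (if v = g k' then (1:ℂ) else 0) *
          (if ∀ j ∈ (Finset.univ.erase l').erase k', f j = g j then (1:ℂ) else 0) := by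
      intro v
      have hiff : (∀ j ∈ Finset.univ.erase l', Function.update f k' v j = g j)
          ↔ (v = g k' ∧ ∀ j ∈ (Finset.univ.erase l').erase k', f j = g j) := by
        constructor
        · intro hc
          refine ⟨?_, ?_⟩
          · have := hc k' (Finset.mem_erase.mpr ⟨hk'l', Finset.mem_univ _⟩)
            simpa using this
          · intro j hj
            have hjk : j ≠ k' := (Finset.mem_erase.mp hj).1
            rw [← hupd v j hjk]
            exact hc j (Finset.mem_of_mem_erase hj)
        · rintro ⟨hv, hc⟩ j hj
          rcases eq_or_ne j k' with rfl | hjk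
          · simpa using hv
          · rw [hupd v j hjk]
            exact hc j (Finset.mem_erase.mpr ⟨hjk, hj⟩)
      rw [if_congr hiff rfl rfl]
      by_cases hv : v = g k' <;> by_cases hc : ∀ j ∈ (Finset.univ.erase l').erase k', f j = g j <;>
        simp [hv, hc]
    have hfl' : ∀ v : Fin 2, Function.update f k' v l' = f l' :=
      fun v => hupd v l' (Ne.symm hk'l')
    simp only [Function.update_self, h1, mul_one, h2, hfl']
    rw [show (∑ v : Fin 2, A (f k') v * (B (f l') (g l') *
        ((if v = g k' then (1:ℂ) else 0) *
          (if ∀ j ∈ (Finset.univ.erase l').erase k', f j = g j then (1:ℂ) else 0))))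
      = ∑ v : Fin 2, (if v = g k' then A (f k') v * B (f l') (g l') *
          (if ∀ j ∈ (Finset.univ.erase l').erase k', f j = g j then (1:ℂ) else 0) else 0) from
      Finset.sum_congr rfl (fun v _ => by by_cases hv : v = g k' <;> simp [hv] <;> ring)]
    rw [Finset.sum_ite_eq']
    simp
  · intro h hne
    have : ∃ j ∈ Finset.univ.erase k', f j ≠ h j := by
      by_contra hc
      push_neg at hc
      apply hne
      funext j
      rcases eq_or_ne j k' with rfl | hj
      · simp
      · rw [Function.update_of_ne hj]
        exact (hc j (Finset.mem_erase.mpr ⟨hj, Finset.mem_univ _⟩)).symm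
    obtain ⟨j, hj, hfj⟩ := this
    rw [if_neg, mul_zero, zero_mul]
    intro hall
    exact hfj (hall j hj)

lemma siteOp_comm (A B : Matrix (Fin 2) (Fin 2) ℂ) (k l : ℕ)
    (hk1 : 1 ≤ k) (hk2 : k ≤ N) (hl1 : 1 ≤ l) (hl2 : l ≤ N) (hkl : k ≠ l) :
    siteOp N A k * siteOp N B l = siteOp N B l * siteOp N A k := by
  ext f g
  rw [siteOp_mul_apply_ne A B k l hk1 hk2 hl1 hl2 hkl,
    siteOp_mul_apply_ne B A l k hl1 hl2 hk1 hk2 (Ne.symm hkl)]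
  rw [Finset.erase_right_comm]
  ring

lemma siteOp_one (k : ℕ) (hk1 : 1 ≤ k) (hk2 : k ≤ N) :
    siteOp N (1 : Matrix (Fin 2) (Fin 2) ℂ) k = 1 := by
  ext f g
  rw [siteOp_apply _ _ hk1 hk2]
  simp only [Matrix.one_apply]
  set k' : Fin N := ⟨k - 1, by omega⟩
  by_cases hfg : f = g
  · subst hfg
    simp
  · have : ∃ j, f j ≠ g j := by
      by_contra hc
      push_neg at hc
      exact hfg (funext hc)
    obtain ⟨j, hj⟩ := this
    rw [if_neg hfg]
    rcases eq_or_ne j k' with rfl | hjk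
    · rw [if_neg hj, zero_mul]
    · have hni : ¬ ∀ j ∈ Finset.univ.erase k', f j = g j :=
        fun hall => hj (hall j (Finset.mem_erase.mpr ⟨hjk, Finset.mem_univ _⟩))
      rw [if_neg hni, mul_zero]

lemma siteOp_neg (A : Matrix (Fin 2) (Fin 2) ℂ) (k : ℕ) (hk1 : 1 ≤ k) (hk2 : k ≤ N) :
    siteOp N (-A) k = -(siteOp N A k) := by
  ext f g
  rw [Matrix.neg_apply, siteOp_apply _ _ hk1 hk2, siteOp_apply _ _ hk1 hk2]
  simp only [Matrix.neg_apply, neg_mul]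

end core

lemma pauliX_sq : pauliX * pauliX = 1 := by
  ext i j
  fin_cases i <;> fin_cases j <;>
    simp [pauliX, Matrix.mul_apply, Fin.sum_univ_two, Matrix.one_apply]

lemma pauliZ_sq : pauliZ * pauliZ = 1 := by
  ext i j
  fin_cases i <;> fin_cases j <;>
    simp [pauliZ, Matrix.mul_apply, Fin.sum_univ_two, Matrix.one_apply]

lemma pauliZX : pauliZ * pauliX = -(pauliX * pauliZ) := by
  ext i j
  fin_cases i <;> fin_cases j <;>
    simp [pauliX, pauliZ, Matrix.mul_apply, Fin.sum_univ_two]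

noncomputable def Pn (N r : ℕ) : Matrix (Fin N → Fin 2) (Fin N → Fin 2) ℂ :=
  ((List.range r).map fun m => siteOp N pauliX (m + 1)).prod

section strings
variable {N : ℕ}

lemma Pn_zero : Pn N 0 = 1 := by simp [Pn]

lemma Pn_succ (r : ℕ) : Pn N (r + 1) = Pn N r * siteOp N pauliX (r + 1) := by
  rw [Pn, List.range_succ]
  simp [Pn]

lemma X_comm_Pn (k : ℕ) (hk1 : 1 ≤ k) (hk2 : k ≤ N) :
    ∀ r, r ≤ N → siteOp N pauliX k * Pn N r = Pn N r * siteOp N pauliX k := by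
  intro r
  induction r with
  | zero => intro _; rw [Pn_zero, mul_one, one_mul]
  | succ r ih =>
    intro hr
    rw [Pn_succ, ← mul_assoc, ih (by omega), mul_assoc, mul_assoc]
    congr 1
    rcases eq_or_ne k (r + 1) with rfl | hne
    · rfl
    · exact siteOp_comm _ _ _ _ hk1 hk2 (by omega) (by omega) hne

lemma Z_gt_Pn (k : ℕ) (hk2 : k ≤ N) :
    ∀ r, r < k → siteOp N pauliZ k * Pn N r = Pn N r * siteOp N pauliZ k := by
  intro r
  induction r with
  | zero => intro _; rw [Pn_zero, mul_one, one_mul]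
  | succ r ih =>
    intro hr
    rw [Pn_succ, ← mul_assoc, ih (by omega), mul_assoc,
      siteOp_comm pauliZ pauliX k (r + 1) (by omega) hk2 (by omega) (by omega) (by omega),
      ← mul_assoc]

lemma ZX_site (k : ℕ) (hk1 : 1 ≤ k) (hk2 : k ≤ N) :
    siteOp N pauliZ k * siteOp N pauliX k = -(siteOp N pauliX k * siteOp N pauliZ k) := by
  rw [siteOp_mul_same _ _ _ hk1 hk2, siteOp_mul_same _ _ _ hk1 hk2, pauliZX,
    siteOp_neg _ _ hk1 hk2]

lemma Z_le_Pn (k : ℕ) (hk1 : 1 ≤ k) :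
    ∀ r, k ≤ r → r ≤ N → siteOp N pauliZ k * Pn N r = -(Pn N r * siteOp N pauliZ k) := by
  intro r
  induction r with
  | zero => omega
  | succ r ih =>
    intro hkr hrN
    rcases eq_or_ne k (r + 1) with rfl | hne
    · rw [Pn_succ, ← mul_assoc, Z_gt_Pn _ hrN r (by omega), mul_assoc,
        ZX_site _ hk1 hrN, mul_neg, ← mul_assoc]
    · rw [Pn_succ, ← mul_assoc, ih (by omega) (by omega), neg_mul, mul_assoc,
        siteOp_comm pauliZ pauliX k (r + 1) hk1 (by omega) (by omega) (by omega) hne,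
        ← mul_assoc]

lemma Pn_sq : ∀ r, r ≤ N → Pn N r * Pn N r = (1 : Matrix (Fin N → Fin 2) (Fin N → Fin 2) ℂ) := by
  intro r
  induction r with
  | zero => intro _; rw [Pn_zero, one_mul]
  | succ r ih =>
    intro hr
    rw [Pn_succ, mul_assoc, ← mul_assoc (siteOp N pauliX (r + 1)),
      X_comm_Pn (r + 1) (by omega) hr r (by omega), mul_assoc, ← mul_assoc,
      siteOp_mul_same _ _ _ (by omega) hr, pauliX_sq, siteOp_one _ (by omega) hr,
      mul_one, ih (by omega)]

lemma Pn_comm (b : ℕ) (hb : b ≤ N) :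
    ∀ a, a ≤ N → Pn N a * Pn N b = Pn N b * Pn N a := by
  intro a
  induction a with
  | zero => intro _; rw [Pn_zero, mul_one, one_mul]
  | succ a ih =>
    intro ha
    rw [Pn_succ, mul_assoc, X_comm_Pn (a + 1) (by omega) ha b hb, ← mul_assoc,
      ih (by omega), mul_assoc]

end strings

lemma anti_anti_mul {M : Type*} [Ring M] {a b P : M}
    (ha : a * P = -(P * a)) (hb : b * P = -(P * b)) : (a * b) * P = P * (a * b) := by
  rw [mul_assoc, hb, mul_neg, ← mul_assoc, ha, neg_mul, neg_neg, mul_assoc]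

lemma anti_comm_mul {M : Type*} [Ring M] {a b P : M}
    (ha : a * P = -(P * a)) (hb : b * P = P * b) : (a * b) * P = -(P * (a * b)) := by
  rw [mul_assoc, hb, ← mul_assoc, ha, neg_mul, mul_assoc]

lemma comm_comm_mul {M : Type*} [Ring M] {a b P : M}
    (ha : a * P = P * a) (hb : b * P = P * b) : (a * b) * P = P * (a * b) := by
  rw [mul_assoc, hb, ← mul_assoc, ha, mul_assoc]


theorem ising_dual_variables_pauli_algebra (N : ℕ) (hN : 2 ≤ N) :
    (∀ i : ℕ, 1 ≤ i → i ≤ N →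
      muX N i * muX N i = 1 ∧ muZ N i * muZ N i = 1 ∧
      muX N i * muZ N i = -(muZ N i * muX N i)) ∧
    (∀ i j : ℕ, 1 ≤ i → i ≤ N → 1 ≤ j → j ≤ N → i ≠ j →
      muX N i * muX N j = muX N j * muX N i ∧
      muX N i * muZ N j = muZ N j * muX N i ∧
      muZ N i * muZ N j = muZ N j * muZ N i) := by
  have hmz : ∀ m : ℕ, muZ N m = Pn N (N + 1 - m) := fun _ => rfl
  have hX1 : muX N 1 = siteOp N pauliZ N := if_pos rfl
  have hZ1 : muZ N 1 = Pn N N := hmz 1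
  have Zc : ∀ k l : ℕ, 1 ≤ k → k ≤ N → 1 ≤ l → l ≤ N →
      siteOp N pauliZ k * siteOp N pauliZ l = siteOp N pauliZ l * siteOp N pauliZ k := by
    intro k l hk1 hk2 hl1 hl2
    rcases eq_or_ne k l with rfl | h
    · rfl
    · exact siteOp_comm _ _ _ _ hk1 hk2 hl1 hl2 h
  constructor
  · intro i hi1 hi2
    by_cases h1 : i = 1
    · subst h1
      rw [hX1, hZ1]
      refine ⟨?_, Pn_sq N le_rfl, ?_⟩
      · rw [siteOp_mul_same _ _ _ (by omega) le_rfl, pauliZ_sq, siteOp_one _ (by omega) le_rfl]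
      · exact Z_le_Pn N (by omega) N le_rfl le_rfl
    · have hi2' : 2 ≤ i := by omega
      simp only [muX, if_neg h1, hmz]
      set r := N + 1 - i with hr
      have hr1 : 1 ≤ r := by omega
      have hr2 : r + 1 ≤ N := by omega
      have hba := Zc (r + 1) r (by omega) hr2 hr1 (by omega)
      refine ⟨?_, Pn_sq r (by omega), ?_⟩
      · rw [mul_assoc, ← mul_assoc (siteOp N pauliZ (r + 1)), hba, ← mul_assoc, ← mul_assoc,
          siteOp_mul_same _ _ _ hr1 (by omega), pauliZ_sq, siteOp_one _ hr1 (by omega), one_mul,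
          siteOp_mul_same _ _ _ (by omega) hr2, pauliZ_sq, siteOp_one _ (by omega) hr2]
      · exact anti_comm_mul (Z_le_Pn r hr1 r le_rfl (by omega))
          (Z_gt_Pn (r + 1) hr2 r (by omega))
  · intro i j hi1 hi2 hj1 hj2 hij
    refine ⟨?_, ?_, ?_⟩
    · -- muX i * muX j = muX j * muX i
      by_cases h1 : i = 1
      · have hj1' : j ≠ 1 := by omega
        subst h1
        rw [hX1]
        simp only [muX, if_neg hj1']
        set b := N + 1 - j with hb
        have hb1 : 1 ≤ b := by omega
        have hb2 : b + 1 ≤ N := by omega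
        exact (comm_comm_mul (Zc b N hb1 (by omega) (by omega) le_rfl)
          (Zc (b + 1) N (by omega) hb2 (by omega) le_rfl)).symm
      · by_cases h2 : j = 1
        · subst h2
          rw [hX1]
          simp only [muX, if_neg h1]
          set a := N + 1 - i with ha
          have ha1 : 1 ≤ a := by omega
          have ha2 : a + 1 ≤ N := by omega
          exact comm_comm_mul (Zc a N ha1 (by omega) (by omega) le_rfl)
            (Zc (a + 1) N (by omega) ha2 (by omega) le_rfl)
        · simp only [muX, if_neg h1, if_neg h2]
          set a := N + 1 - i with ha
          set b := N + 1 - j with hb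
          have ha1 : 1 ≤ a := by omega
          have ha2 : a + 1 ≤ N := by omega
          have hb1 : 1 ≤ b := by omega
          have hb2 : b + 1 ≤ N := by omega
          exact comm_comm_mul
            ((comm_comm_mul (Zc b a hb1 (by omega) ha1 (by omega))
              (Zc (b + 1) a (by omega) hb2 ha1 (by omega))).symm)
            ((comm_comm_mul (Zc b (a + 1) hb1 (by omega) (by omega) ha2)
              (Zc (b + 1) (a + 1) (by omega) hb2 (by omega) ha2)).symm)
    · -- muX i * muZ j = muZ j * muX i
      rw [hmz]
      set b := N + 1 - j with hb
      have hbN : b ≤ N := by omega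
      by_cases h1 : i = 1
      · have hj1' : j ≠ 1 := by omega
        subst h1
        rw [hX1]
        exact Z_gt_Pn N le_rfl b (by omega)
      · simp only [muX, if_neg h1]
        set a := N + 1 - i with ha
        have ha1 : 1 ≤ a := by omega
        have ha2 : a + 1 ≤ N := by omega
        rcases lt_or_gt_of_ne hij with hlt | hgt
        · -- i < j, so b < a
          exact comm_comm_mul (Z_gt_Pn a (by omega) b (by omega))
            (Z_gt_Pn (a + 1) ha2 b (by omega))
        · -- i > j, so a + 1 ≤ b
          exact anti_anti_mul (Z_le_Pn a ha1 b (by omega) hbN)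
            (Z_le_Pn (a + 1) (by omega) b (by omega) hbN)
    · rw [hmz, hmz]
      exact Pn_comm (N + 1 - j) (by omega) (N + 1 - i) (by omega)
end

section
/- Let N ≥ 1 be an integer and K, h̃ > 0 real numbers. Define the partition function of the periodic classical Ising chain in a longitudinal field by Z_I(K, h̃) = Σ_{σ : Fin N → {−1,1}} exp( Σ_{i=1}^{N} ( K σ_i σ_{i+1} + h̃ σ_i ) ), with the periodic convention σ_{N+1} = σ_1. Let K*, h̃* > 0 be the unique positive reals determined by sinh(2K) · sinh(2 h̃*) = 1 and sinh(2K*) · sinh(2 h̃) = 1. Then Z_I(K, h̃) / (2 sinh(2 h̃))^{N/2} = Z_I(K*, h̃*) / (2 sinh(2 h̃*))^{N/2}. In particular the classical Ising chain in an external field is exactly self-dual, with self-dual line sinh(2K) sinh(2 h̃) = 1. -/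
open Real Finset
namespace IsingDual
abbrev S : Type := ({-1, 1} : Finset ℤ)
noncomputable def Tm (K h : ℝ) (a b : S) : ℝ :=
  Real.exp (K * ((a : ℤ) : ℝ) * ((b : ℤ) : ℝ) + h * ((a : ℤ) : ℝ))
def em : S := ⟨-1, by simp⟩
def e1 : S := ⟨1, by simp⟩
lemma sum_S (f : S → ℝ) : (∑ c : S, f c) = f em + f e1 := by
  have huniv : (Finset.univ : Finset S) = {em, e1} := by
    ext x
    simp only [Finset.mem_univ, Finset.mem_insert, Finset.mem_singleton, true_iff]
    have := x.2
    simp only [Finset.mem_insert, Finset.mem_singleton] at this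
    rcases this with h | h
    · exact Or.inl (Subtype.ext h)
    · exact Or.inr (Subtype.ext h)
  rw [huniv, Finset.sum_insert (by simp [em, e1]), Finset.sum_singleton]

lemma eq_em_or_e1 (a : S) : a = em ∨ a = e1 := by
  have := a.2
  simp only [Finset.mem_insert, Finset.mem_singleton] at this
  rcases this with h | h
  · exact Or.inl (Subtype.ext h)
  · exact Or.inr (Subtype.ext h)

noncomputable def tt (K h : ℝ) : ℝ := Real.exp (K - h) + Real.exp (K + h)
noncomputable def dd (K : ℝ) : ℝ := Real.exp (2 * K) - Real.exp (-(2 * K))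

lemma CH (K h : ℝ) (a b : S) :
    (∑ c : S, Tm K h a c * Tm K h c b)
      = tt K h * Tm K h a b - dd K * (if a = b then (1 : ℝ) else 0) := by
  rw [sum_S]
  rcases eq_em_or_e1 a with rfl | rfl <;> rcases eq_em_or_e1 b with rfl | rfl <;>
    simp only [Tm, tt, dd, em, e1, if_true, if_pos rfl] <;>
    norm_num <;>
    rw [← Real.exp_add, ← Real.exp_add] <;>
    ring_nf <;>
    simp only [← Real.exp_add] <;>
    ring_nf <;>
    simp only [sq, ← Real.exp_add] <;>
    ring_nf
end IsingDual
namespace IsingDual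

noncomputable def W (K h : ℝ) : ℕ → S → S → ℝ
  | 0 => fun a b => if a = b then 1 else 0
  | n + 1 => fun a b => ∑ c : S, Tm K h a c * W K h n c b

lemma W_succ_right (K h : ℝ) (n : ℕ) (a b : S) :
    W K h (n + 1) a b = ∑ c : S, W K h n a c * Tm K h c b := by
  induction n generalizing a b with
  | zero =>
      simp only [W]
      rw [sum_S, sum_S]
      rcases eq_em_or_e1 a with rfl | rfl <;> rcases eq_em_or_e1 b with rfl | rfl <;>
        simp [em, e1]
  | succ n ih =>
      show (∑ c : S, Tm K h a c * W K h (n+1) c b) = _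
      calc (∑ c : S, Tm K h a c * W K h (n+1) c b)
          = ∑ c : S, ∑ e : S, Tm K h a c * (W K h n c e * Tm K h e b) := by
            refine Finset.sum_congr rfl fun c _ => ?_
            rw [ih, Finset.mul_sum]
        _ = ∑ e : S, (∑ c : S, Tm K h a c * W K h n c e) * Tm K h e b := by
            rw [Finset.sum_comm]
            refine Finset.sum_congr rfl fun e _ => ?_
            rw [Finset.sum_mul]
            exact Finset.sum_congr rfl fun c _ => by ring
        _ = ∑ e : S, W K h (n+1) a e * Tm K h e b := rfl

end IsingDual
namespace IsingDual

lemma W_rec (K h : ℝ) (n : ℕ) (a b : S) :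
    W K h (n + 2) a b = tt K h * W K h (n + 1) a b - dd K * W K h n a b := by
  calc W K h (n + 2) a b
      = ∑ e : S, W K h (n+1) a e * Tm K h e b := W_succ_right K h (n+1) a b
    _ = ∑ e : S, (∑ c : S, W K h n a c * Tm K h c e) * Tm K h e b := by
        refine Finset.sum_congr rfl fun e _ => ?_
        rw [W_succ_right]
    _ = ∑ c : S, W K h n a c * ∑ e : S, Tm K h c e * Tm K h e b := by
        simp only [Finset.sum_mul, Finset.mul_sum]
        rw [Finset.sum_comm]
        exact Finset.sum_congr rfl fun c _ => Finset.sum_congr rfl fun e _ => by ring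
    _ = ∑ c : S, W K h n a c *
          (tt K h * Tm K h c b - dd K * (if c = b then (1:ℝ) else 0)) := by
        refine Finset.sum_congr rfl fun c _ => by rw [CH]
    _ = tt K h * W K h (n + 1) a b - dd K * W K h n a b := by
        rw [W_succ_right, Finset.mul_sum]
        rw [show dd K * W K h n a b
            = ∑ c : S, dd K * (W K h n a c * (if c = b then (1:ℝ) else 0)) by
          rw [sum_S]
          rcases eq_em_or_e1 b with rfl | rfl <;>
            simp [em, e1, Subtype.ext_iff] <;> ring]
        rw [← Finset.sum_sub_distrib]
        exact Finset.sum_congr rfl fun c _ => by ring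

noncomputable def Tr (K h : ℝ) (n : ℕ) : ℝ := ∑ a : S, W K h n a a

lemma Tr_zero (K h : ℝ) : Tr K h 0 = 2 := by
  rw [Tr, sum_S]; norm_num [W]

lemma Tr_one (K h : ℝ) : Tr K h 1 = tt K h := by
  have key : ∀ a : S, W K h 1 a a = Tm K h a a := by
    intro a
    show (∑ c : S, Tm K h a c * W K h 0 c a) = _
    rw [sum_S]
    rcases eq_em_or_e1 a with rfl | rfl <;> simp [W, em, e1, Subtype.ext_iff]
  rw [Tr, sum_S, key, key]
  simp only [Tm, tt, em, e1]
  norm_num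
  ring_nf

lemma Tr_rec (K h : ℝ) (n : ℕ) :
    Tr K h (n + 2) = tt K h * Tr K h (n + 1) - dd K * Tr K h n := by
  simp only [Tr]
  rw [Finset.mul_sum, Finset.mul_sum, ← Finset.sum_sub_distrib]
  exact Finset.sum_congr rfl fun a _ => W_rec K h n a a

end IsingDual
namespace IsingDual

noncomputable def pp (K h : ℝ) {m : ℕ} (g : Fin (m + 1) → S) : ℝ :=
  ∏ i : Fin m, Tm K h (g i.castSucc) (g i.succ)

lemma pp_cons (K h : ℝ) {m : ℕ} (a : S) (g : Fin (m + 1) → S) :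
    pp K h (Fin.cons a g) = Tm K h a (g 0) * pp K h g := by
  simp only [pp, Fin.prod_univ_succ, Fin.castSucc_zero, Fin.cons_zero, Fin.succ_zero_eq_one,
    ← Fin.succ_castSucc, Fin.cons_succ]

lemma W_eq_path (K h : ℝ) (n : ℕ) (a b : S) :
    W K h (n + 1) a b = ∑ f : Fin n → S, pp K h (Fin.cons a (Fin.snoc f b)) := by
  induction n generalizing a with
  | zero =>
      rw [Fintype.sum_unique]
      show (∑ c : S, Tm K h a c * W K h 0 c b) = _
      rw [sum_S]
      have hpp : pp K h (Fin.cons a (Fin.snoc (default : Fin 0 → S) b)) = Tm K h a b := by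
        rw [pp_cons]
        rw [Fin.snoc_zero]
        simp [pp]
      rw [hpp]
      rcases eq_em_or_e1 a with rfl | rfl <;> rcases eq_em_or_e1 b with rfl | rfl <;>
        simp [W, em, e1, Subtype.ext_iff]
  | succ n ih =>
      show (∑ c : S, Tm K h a c * W K h (n + 1) c b) = _
      calc (∑ c : S, Tm K h a c * W K h (n + 1) c b)
          = ∑ c : S, ∑ f : Fin n → S, Tm K h a c * pp K h (Fin.cons c (Fin.snoc f b)) := by
            refine Finset.sum_congr rfl fun c _ => ?_
            rw [ih, Finset.mul_sum]
        _ = ∑ c : S, ∑ f : Fin n → S, pp K h (Fin.cons a (Fin.snoc (Fin.cons c f) b)) := by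
            refine Finset.sum_congr rfl fun c _ => Finset.sum_congr rfl fun f _ => ?_
            conv_rhs => rw [← Fin.cons_snoc_eq_snoc_cons, pp_cons, Fin.cons_zero]
        _ = ∑ p : S × (Fin n → S), pp K h (Fin.cons a (Fin.snoc (Fin.cons p.1 p.2) b)) := by
            rw [Fintype.sum_prod_type]
        _ = ∑ f' : Fin (n + 1) → S, pp K h (Fin.cons a (Fin.snoc f' b)) :=
            (Fintype.sum_equiv (Fin.consEquiv (fun _ : Fin (n + 1) => S)).symm _ _
              (fun f' => by simp [Fin.consEquiv])).symm

end IsingDual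
namespace IsingDual

lemma snoc_succ_eq {n : ℕ} (σ : Fin (n + 1) → S) (i : Fin (n + 1)) :
    (Fin.snoc σ (σ 0) : Fin (n + 2) → S) i.succ = σ (i + 1) := by
  rcases eq_or_ne i (Fin.last n) with rfl | hne
  · rw [Fin.succ_last, Fin.snoc_last, Fin.last_add_one]
  · have hcast : i.succ = (i + 1).castSucc := by
      ext
      rw [Fin.val_succ, Fin.coe_castSucc, Fin.val_add_one_of_lt (Fin.lt_last_iff_ne_last.mpr hne)]
    rw [hcast, Fin.snoc_castSucc]

lemma cyclic_eq_pp (K h : ℝ) {n : ℕ} (σ : Fin (n + 1) → S) :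
    (∏ i : Fin (n + 1), Tm K h (σ i) (σ (i + 1))) = pp K h (Fin.snoc σ (σ 0)) := by
  rw [pp]
  refine Finset.prod_congr rfl fun i _ => ?_
  rw [Fin.snoc_castSucc, snoc_succ_eq σ i]

lemma Z_eq_Tr (n : ℕ) (K h : ℝ) :
    (∑ σ : Fin (n + 1) → S,
      Real.exp (∑ i : Fin (n + 1),
        (K * ((σ i : ℤ) : ℝ) * ((σ (i + 1) : ℤ) : ℝ) + h * ((σ i : ℤ) : ℝ))))
      = Tr K h (n + 1) := by
  calc (∑ σ : Fin (n + 1) → S,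
        Real.exp (∑ i : Fin (n + 1),
          (K * ((σ i : ℤ) : ℝ) * ((σ (i + 1) : ℤ) : ℝ) + h * ((σ i : ℤ) : ℝ))))
      = ∑ σ : Fin (n + 1) → S, ∏ i : Fin (n + 1), Tm K h (σ i) (σ (i + 1)) := by
        refine Finset.sum_congr rfl fun σ _ => ?_
        rw [Real.exp_sum]
        rfl
    _ = ∑ σ : Fin (n + 1) → S, pp K h (Fin.snoc σ (σ 0)) := by
        exact Finset.sum_congr rfl fun σ _ => cyclic_eq_pp K h σ
    _ = ∑ p : S × (Fin n → S), pp K h (Fin.snoc (Fin.cons p.1 p.2) p.1) := by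
        refine Fintype.sum_equiv (Fin.consEquiv (fun _ : Fin (n + 1) => S)).symm _ _ fun σ => ?_
        simp [Fin.consEquiv]
    _ = ∑ a : S, ∑ f : Fin n → S, pp K h (Fin.cons a (Fin.snoc f a)) := by
        rw [Fintype.sum_prod_type]
        refine Finset.sum_congr rfl fun a _ => Finset.sum_congr rfl fun f _ => ?_
        rw [Fin.cons_snoc_eq_snoc_cons]
    _ = ∑ a : S, W K h (n + 1) a a := by
        exact Finset.sum_congr rfl fun a _ => (W_eq_path K h n a a).symm
    _ = Tr K h (n + 1) := rfl

end IsingDual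
namespace IsingDual

lemma trace_dual (t d t' d' r r' : ℝ) (A B : ℕ → ℝ)
    (hA0 : A 0 = 2) (hB0 : B 0 = 2) (hA1 : A 1 = t) (hB1 : B 1 = t')
    (hArec : ∀ n, A (n + 2) = t * A (n + 1) - d * A n)
    (hBrec : ∀ n, B (n + 2) = t' * B (n + 1) - d' * B n)
    (htr : t * r' = t' * r) (hdr : d * r' ^ 2 = d' * r ^ 2) :
    ∀ n, A n * r' ^ n = B n * r ^ n := by
  intro n
  induction n using Nat.twoStepInduction with
  | zero => simp [hA0, hB0]
  | one => simpa [hA1, hB1] using htr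
  | more n ih2 ih1 =>
      rw [hArec, hBrec]
      linear_combination (t * r') * ih1 + (B (n + 1) * r ^ (n + 1)) * htr
        - (d * r' ^ 2) * ih2 - (B n * r ^ n) * hdr

lemma tt_pos (K h : ℝ) : 0 < tt K h := by
  unfold tt; positivity

lemma exp_sinh_identity (K h' : ℝ) (hh' : 0 < h')
    (hd : Real.sinh (2 * K) * Real.sinh (2 * h') = 1) :
    Real.exp (2 * K) * Real.sinh (2 * h') = 1 + Real.cosh (2 * h') := by
  have hs' : 0 < Real.sinh (2 * h') := Real.sinh_pos_iff.mpr (by linarith)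
  have hcK : 0 < Real.cosh (2 * K) := Real.cosh_pos _
  have hch' : 0 < Real.cosh (2 * h') := Real.cosh_pos _
  have h1 := Real.cosh_sq_sub_sinh_sq (2 * K)
  have h2 := Real.cosh_sq_sub_sinh_sq (2 * h')
  have hsq : (Real.cosh (2 * K) * Real.sinh (2 * h') - Real.cosh (2 * h'))
      * (Real.cosh (2 * K) * Real.sinh (2 * h') + Real.cosh (2 * h')) = 0 := by
    linear_combination (Real.sinh (2 * h')) ^ 2 * h1 - h2
      + (Real.sinh (2 * K) * Real.sinh (2 * h') + 1) * hd
  have hc : Real.cosh (2 * K) * Real.sinh (2 * h') = Real.cosh (2 * h') := by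
    rcases mul_eq_zero.mp hsq with h0 | h0
    · linarith
    · nlinarith
  rw [← Real.cosh_add_sinh]
  linear_combination hc + hd

lemma tt_sq_eq (K h : ℝ) :
    tt K h ^ 2 = Real.exp (2 * K) * (2 + 2 * Real.cosh (2 * h)) := by
  rw [tt, Real.cosh_eq]
  ring_nf
  simp only [sq, ← Real.exp_add]
  ring_nf

lemma tt_sq_dual (K h h' : ℝ) (hh' : 0 < h')
    (hd : Real.sinh (2 * K) * Real.sinh (2 * h') = 1) :
    tt K h ^ 2 * (2 * Real.sinh (2 * h'))
      = 4 * (1 + Real.cosh (2 * h)) * (1 + Real.cosh (2 * h')) := by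
  have hexp := exp_sinh_identity K h' hh' hd
  have htt := tt_sq_eq K h
  linear_combination (2 * Real.sinh (2 * h')) * htt + (4 * (1 + Real.cosh (2 * h))) * hexp

lemma dd_eq (K : ℝ) : dd K = 2 * Real.sinh (2 * K) := by
  rw [dd, Real.sinh_eq]; ring

end IsingDual

/-- The partition function of the periodic classical Ising chain on `N` sites in a
longitudinal field: `Z_I(K, h) = Σ_{σ : Fin N → {-1,1}} exp (Σ_i (K σ_i σ_{i+1} + h σ_i))`,
with the periodic convention `σ_{N+1} = σ_1` (addition in `Fin N` is cyclic). -/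
noncomputable def isingChainFieldZ (N : ℕ) [NeZero N] (K h : ℝ) : ℝ :=
  ∑ σ : Fin N → ({-1, 1} : Finset ℤ),
    Real.exp (∑ i : Fin N,
      (K * ((σ i : ℤ) : ℝ) * ((σ (i + 1) : ℤ) : ℝ) + h * ((σ i : ℤ) : ℝ)))

/-- **Exact self-duality of the classical Ising chain in an external field.** -/
theorem ising_chain_in_field_selfdual (N : ℕ) [NeZero N] (K h K' h' : ℝ)
    (hK : 0 < K) (hh : 0 < h) (hK' : 0 < K') (hh' : 0 < h')
    (hdual₁ : Real.sinh (2 * K) * Real.sinh (2 * h') = 1)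
    (hdual₂ : Real.sinh (2 * K') * Real.sinh (2 * h) = 1) :
    isingChainFieldZ N K h / (2 * Real.sinh (2 * h)) ^ ((N : ℝ) / 2)
      = isingChainFieldZ N K' h' / (2 * Real.sinh (2 * h')) ^ ((N : ℝ) / 2) := by
  open IsingDual in
  obtain ⟨n, rfl⟩ : ∃ n, N = n + 1 :=
    ⟨N - 1, (Nat.succ_pred_eq_of_ne_zero (NeZero.ne N)).symm⟩
  set c : ℝ := 2 * Real.sinh (2 * h) with hc_def
  set c' : ℝ := 2 * Real.sinh (2 * h') with hc'_def
  have hc_pos : 0 < c := by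
    have := Real.sinh_pos_iff.mpr (by linarith : (0:ℝ) < 2 * h)
    positivity
  have hc'_pos : 0 < c' := by
    have := Real.sinh_pos_iff.mpr (by linarith : (0:ℝ) < 2 * h')
    positivity
  set r : ℝ := Real.sqrt c with hr_def
  set r' : ℝ := Real.sqrt c' with hr'_def
  have hr_pos : 0 < r := Real.sqrt_pos.mpr hc_pos
  have hr'_pos : 0 < r' := Real.sqrt_pos.mpr hc'_pos
  have hr2 : r ^ 2 = c := Real.sq_sqrt hc_pos.le
  have hr'2 : r' ^ 2 = c' := Real.sq_sqrt hc'_pos.le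
  -- key invariants
  have ht : tt K h * r' = tt K' h' * r := by
    have e1 := tt_sq_dual K h h' hh' hdual₁
    have e2 := tt_sq_dual K' h' h hh hdual₂
    have hsq : (tt K h * r') ^ 2 = (tt K' h' * r) ^ 2 := by
      rw [mul_pow, mul_pow, hr2, hr'2]
      linear_combination e1 - e2
    have h0 : (tt K h * r' - tt K' h' * r) * (tt K h * r' + tt K' h' * r) = 0 := by
      linear_combination hsq
    rcases mul_eq_zero.mp h0 with h0 | h0
    · linarith
    · nlinarith [tt_pos K h, tt_pos K' h']
  have hd : dd K * r' ^ 2 = dd K' * r ^ 2 := by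
    rw [hr2, hr'2, dd_eq, dd_eq, hc_def, hc'_def]
    linear_combination 4 * hdual₁ - 4 * hdual₂
  have key := trace_dual (tt K h) (dd K) (tt K' h') (dd K') r r'
    (Tr K h) (Tr K' h') (Tr_zero K h) (Tr_zero K' h') (Tr_one K h) (Tr_one K' h')
    (Tr_rec K h) (Tr_rec K' h') ht hd (n + 1)
  -- rewrite partition functions as traces
  have hZ : isingChainFieldZ (n + 1) K h = Tr K h (n + 1) := Z_eq_Tr n K h
  have hZ' : isingChainFieldZ (n + 1) K' h' = Tr K' h' (n + 1) := Z_eq_Tr n K' h'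
  -- rewrite rpow as pow of sqrt
  have hpow : ∀ x : ℝ, 0 < x → x ^ ((↑(n + 1) : ℝ) / 2) = Real.sqrt x ^ (n + 1) := by
    intro x hx
    rw [Real.sqrt_eq_rpow, ← Real.rpow_natCast (x ^ (1 / (2:ℝ))) (n + 1),
      ← Real.rpow_mul hx.le]
    congr 1
    push_cast
    ring
  rw [hZ, hZ', hpow c hc_pos, hpow c' hc'_pos, ← hr_def, ← hr'_def,
    div_eq_div_iff (pow_pos hr_pos _).ne' (pow_pos hr'_pos _).ne']
  exact key
end

section
/- Fix L ≥ 2 and let r₁, r₂, …, r_q (2 ≤ q ≤ L) be pairwise distinct indices in {1, …, L}. On (ℂ²)^{⊗L} define the spin bonds b_k = σ⁺_{r_k} σ⁻_{r_{k+1}} for k = 1, …, q−1 and the closing bond b_q = σ⁺_{r_q} σ⁻_{r₁}, and the nested anticommutators A₁ = b₁, A_k = {A_{k−1}, b_k} for k = 2, …, q. Then A_q = (1/2)(1 − σ^z_{r₁} σ^z_{r_q}). In particular the result depends only on the endpoints r₁ and r_q of the path and is independent of the intermediate sites r₂, …, r_{q−1}. -/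
open Matrix

noncomputable def sigmaPlus : Matrix (Fin 2) (Fin 2) ℂ := !![0, 1; 0, 0]

noncomputable def sigmaMinus : Matrix (Fin 2) (Fin 2) ℂ := !![0, 0; 1, 0]

namespace SpinLoopAux

open Kronecker

/-- `siteOp` expressed as a reindexed Kronecker product (with the identity). -/
noncomputable def siteOp' (N : ℕ) (A : Matrix (Fin 2) (Fin 2) ℂ) (i : Fin N) :
    Matrix (Fin N → Fin 2) (Fin N → Fin 2) ℂ :=
  (A ⊗ₖ (1 : Matrix ({j : Fin N // j ≠ i} → Fin 2) ({j : Fin N // j ≠ i} → Fin 2) ℂ)).submatrix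
    (Equiv.funSplitAt i (Fin 2)) (Equiv.funSplitAt i (Fin 2))

theorem siteOp_eq {N : ℕ} (A : Matrix (Fin 2) (Fin 2) ℂ) (k : ℕ) (h : 1 ≤ k ∧ k ≤ N) :
    siteOp N A k = siteOp' N A ⟨k - 1, by omega⟩ := by
  set i : Fin N := ⟨k - 1, by omega⟩
  ext f g
  rw [siteOp, dif_pos h]
  simp only [siteOp', Matrix.submatrix_apply, Equiv.funSplitAt_apply,
    Matrix.kroneckerMap_apply, Matrix.of_apply, Matrix.one_apply]
  rw [Finset.prod_boole]
  congr 1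
  simp [funext_iff, Subtype.forall, Finset.mem_erase]
  rfl

theorem siteOp'_mul_same {N : ℕ} (A B : Matrix (Fin 2) (Fin 2) ℂ) (i : Fin N) :
    siteOp' N A i * siteOp' N B i = siteOp' N (A * B) i := by
  rw [siteOp', siteOp', siteOp', Matrix.submatrix_mul_equiv, ← Matrix.mul_kronecker_mul,
    Matrix.one_mul]

theorem siteOp'_add {N : ℕ} (A B : Matrix (Fin 2) (Fin 2) ℂ) (i : Fin N) :
    siteOp' N (A + B) i = siteOp' N A i + siteOp' N B i := by
  ext f g
  simp [siteOp', Matrix.add_apply, add_mul]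

theorem siteOp'_sub {N : ℕ} (A B : Matrix (Fin 2) (Fin 2) ℂ) (i : Fin N) :
    siteOp' N (A - B) i = siteOp' N A i - siteOp' N B i := by
  ext f g
  simp [siteOp', Matrix.sub_apply, sub_mul]

theorem siteOp'_one {N : ℕ} (i : Fin N) : siteOp' N 1 i = 1 := by
  rw [siteOp', Matrix.one_kronecker_one, Matrix.submatrix_one_equiv]

theorem siteOp_mul_same {N : ℕ} (A B : Matrix (Fin 2) (Fin 2) ℂ) (k : ℕ)
    (h : 1 ≤ k ∧ k ≤ N) :
    siteOp N A k * siteOp N B k = siteOp N (A * B) k := by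
  rw [siteOp_eq A k h, siteOp_eq B k h, siteOp_eq (A * B) k h, siteOp'_mul_same]

theorem siteOp_one {N : ℕ} (k : ℕ) (h : 1 ≤ k ∧ k ≤ N) :
    siteOp N (1 : Matrix (Fin 2) (Fin 2) ℂ) k = 1 := by
  rw [siteOp_eq _ k h, siteOp'_one]

/-- Product of site operators at two distinct sites, entrywise. -/
theorem siteOp_mul_apply_ne {N : ℕ} (A B : Matrix (Fin 2) (Fin 2) ℂ) {k l : ℕ}
    (hk : 1 ≤ k ∧ k ≤ N) (hl : 1 ≤ l ∧ l ≤ N) (hkl : k ≠ l) :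
    siteOp N A k * siteOp N B l = Matrix.of fun f g =>
      A (f ⟨k - 1, by omega⟩) (g ⟨k - 1, by omega⟩) *
      B (f ⟨l - 1, by omega⟩) (g ⟨l - 1, by omega⟩) *
        ∏ j ∈ (Finset.univ.erase (⟨l - 1, by omega⟩ : Fin N)).erase (⟨k - 1, by omega⟩ : Fin N),
          (if f j = g j then (1 : ℂ) else 0) := by
  set ik : Fin N := ⟨k - 1, by omega⟩ with hik_def
  set il : Fin N := ⟨l - 1, by omega⟩ with hil_def
  have hne : ik ≠ il := by
    simp only [hik_def, hil_def, ne_eq, Fin.mk.injEq]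
    omega
  ext f g
  rw [Matrix.mul_apply]
  simp only [siteOp, dif_pos hk, dif_pos hl, Matrix.of_apply]
  rw [Finset.sum_eq_single (Function.update f ik (g ik))]
  · have h1 : (∏ j ∈ Finset.univ.erase ik,
        (if f j = Function.update f ik (g ik) j then (1 : ℂ) else 0)) = 1 := by
      apply Finset.prod_eq_one
      intro j hj
      rw [Function.update_of_ne (Finset.mem_erase.mp hj).1, if_pos rfl]
    have hmem : ik ∈ Finset.univ.erase il := by
      simp [hne]
    have h2 : (∏ j ∈ Finset.univ.erase il,
        (if Function.update f ik (g ik) j = g j then (1 : ℂ) else 0)) =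
        ∏ j ∈ (Finset.univ.erase il).erase ik, (if f j = g j then (1 : ℂ) else 0) := by
      rw [← Finset.mul_prod_erase _ _ hmem, Function.update_self, if_pos rfl, one_mul]
      apply Finset.prod_congr rfl
      intro j hj
      rw [Function.update_of_ne (Finset.mem_erase.mp hj).1]
    rw [h1, h2, Function.update_self, Function.update_of_ne (Ne.symm hne)]
    ring
  · intro h _ hneq
    by_cases hall : ∀ j, j ≠ ik → h j = f j
    · have hgi : h ik ≠ g ik := by
        intro e
        apply hneq
        funext j
        by_cases hj : j = ik
        · subst hj; rw [Function.update_self]; exact e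
        · rw [Function.update_of_ne hj]; exact hall j hj
      have : (∏ j ∈ Finset.univ.erase il, (if h j = g j then (1 : ℂ) else 0)) = 0 := by
        apply Finset.prod_eq_zero (i := ik) (by simp [hne])
        rw [if_neg hgi]
      rw [this]
      ring
    · push_neg at hall
      obtain ⟨j, hj, hj'⟩ := hall
      have : (∏ j ∈ Finset.univ.erase ik, (if f j = h j then (1 : ℂ) else 0)) = 0 := by
        apply Finset.prod_eq_zero (i := j) (by simp [hj])
        rw [if_neg (Ne.symm hj')]
      rw [this]
      ring
  · intro hmem
    exact absurd (Finset.mem_univ _) hmem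

theorem siteOp_comm {N : ℕ} (A B : Matrix (Fin 2) (Fin 2) ℂ) {k l : ℕ}
    (hk : 1 ≤ k ∧ k ≤ N) (hl : 1 ≤ l ∧ l ≤ N) (hkl : k ≠ l) :
    siteOp N A k * siteOp N B l = siteOp N B l * siteOp N A k := by
  rw [siteOp_mul_apply_ne A B hk hl hkl, siteOp_mul_apply_ne B A hl hk (Ne.symm hkl)]
  ext f g
  simp only [Matrix.of_apply]
  rw [Finset.erase_right_comm]
  ring

/-- 2×2 matrix facts. -/
theorem pm_eq : sigmaPlus * sigmaMinus = !![(1 : ℂ), 0; 0, 0] := by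
  rw [sigmaPlus, sigmaMinus, Matrix.mul_fin_two]; norm_num

theorem mp_eq : sigmaMinus * sigmaPlus = !![(0 : ℂ), 0; 0, 1] := by
  rw [sigmaPlus, sigmaMinus, Matrix.mul_fin_two]; norm_num

theorem sum_eq_one : !![(1 : ℂ), 0; 0, 0] + !![(0 : ℂ), 0; 0, 1] = 1 := by
  rw [Matrix.one_fin_two]; norm_num [← Matrix.ext_iff, Fin.forall_fin_two]

theorem z_eq : pauliZ = !![(1 : ℂ), 0; 0, 0] - !![(0 : ℂ), 0; 0, 1] := by
  ext i j
  fin_cases i <;> fin_cases j <;> simp [pauliZ, Matrix.sub_apply]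

/-- The chain step: `{σ⁺_a σ⁻_b, σ⁺_b σ⁻_c} = σ⁺_a σ⁻_c` for distinct sites. -/
theorem chain {N : ℕ} {a b c : ℕ} (ha : 1 ≤ a ∧ a ≤ N) (hb : 1 ≤ b ∧ b ≤ N)
    (hc : 1 ≤ c ∧ c ≤ N) (hab : a ≠ b) (hbc : b ≠ c) (hac : a ≠ c) :
    (siteOp N sigmaPlus a * siteOp N sigmaMinus b) *
      (siteOp N sigmaPlus b * siteOp N sigmaMinus c) +
    (siteOp N sigmaPlus b * siteOp N sigmaMinus c) *
      (siteOp N sigmaPlus a * siteOp N sigmaMinus b)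
    = siteOp N sigmaPlus a * siteOp N sigmaMinus c := by
  set P := fun x => siteOp N sigmaPlus x
  set M := fun x => siteOp N sigmaMinus x
  have e1 : (P a * M b) * (P b * M c) = P a * ((M b * P b) * M c) := by
    noncomm_ring
  have e2 : (P b * M c) * (P a * M b) = P a * ((P b * M b) * M c) := by
    calc (P b * M c) * (P a * M b) = P b * (M c * P a) * M b := by
          noncomm_ring
      _ = P b * (P a * M c) * M b := by
          rw [siteOp_comm _ _ hc ha (Ne.symm hac)]
      _ = (P b * P a) * (M c * M b) := by
          noncomm_ring
      _ = (P a * P b) * (M b * M c) := by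
          rw [siteOp_comm _ _ hb ha (Ne.symm hab), siteOp_comm _ _ hc hb (Ne.symm hbc)]
      _ = P a * ((P b * M b) * M c) := by
          noncomm_ring
  rw [e1, e2, ← mul_add, ← add_mul, siteOp_mul_same _ _ _ hb, siteOp_mul_same _ _ _ hb,
    mp_eq, pm_eq]
  have hfuse : siteOp N !![(0 : ℂ), 0; 0, 1] b + siteOp N !![(1 : ℂ), 0; 0, 0] b = 1 := by
    rw [siteOp_eq _ b hb, siteOp_eq _ b hb, ← siteOp'_add,
      show !![(0 : ℂ), 0; 0, 1] + !![(1 : ℂ), 0; 0, 0] = 1 from by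
        rw [add_comm]; exact sum_eq_one]
    exact siteOp'_one _
  rw [hfuse, one_mul]

theorem siteOp_nm_sum {N : ℕ} {a : ℕ} (ha : 1 ≤ a ∧ a ≤ N) :
    siteOp N !![(1 : ℂ), 0; 0, 0] a + siteOp N !![(0 : ℂ), 0; 0, 1] a = 1 := by
  rw [siteOp_eq _ a ha, siteOp_eq _ a ha, ← siteOp'_add, sum_eq_one, siteOp'_one]

/-- The closing step. -/
theorem close {N : ℕ} {a b : ℕ} (ha : 1 ≤ a ∧ a ≤ N) (hb : 1 ≤ b ∧ b ≤ N) (hab : a ≠ b) :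
    (siteOp N sigmaPlus a * siteOp N sigmaMinus b) *
      (siteOp N sigmaPlus b * siteOp N sigmaMinus a) +
    (siteOp N sigmaPlus b * siteOp N sigmaMinus a) *
      (siteOp N sigmaPlus a * siteOp N sigmaMinus b)
    = ((1 : ℂ) / 2) • (1 - siteOp N pauliZ a * siteOp N pauliZ b) := by
  set nM : Matrix (Fin 2) (Fin 2) ℂ := !![(1 : ℂ), 0; 0, 0]
  set mM : Matrix (Fin 2) (Fin 2) ℂ := !![(0 : ℂ), 0; 0, 1]
  set P := fun x => siteOp N sigmaPlus x
  set M := fun x => siteOp N sigmaMinus x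
  set X := siteOp N nM a
  set Y := siteOp N mM a
  set U := siteOp N nM b
  set V := siteOp N mM b
  have e1 : (P a * M b) * (P b * M a) = X * V := by
    calc (P a * M b) * (P b * M a) = P a * ((M b * P b) * M a) := by
          noncomm_ring
      _ = P a * (siteOp N mM b * M a) := by rw [siteOp_mul_same _ _ _ hb, mp_eq]
      _ = P a * (M a * siteOp N mM b) := by rw [siteOp_comm _ _ hb ha (Ne.symm hab)]
      _ = (P a * M a) * siteOp N mM b := by rw [mul_assoc]
      _ = X * V := by rw [siteOp_mul_same _ _ _ ha, pm_eq]
  have e2 : (P b * M a) * (P a * M b) = Y * U := by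
    calc (P b * M a) * (P a * M b) = P b * ((M a * P a) * M b) := by
          noncomm_ring
      _ = P b * (siteOp N mM a * M b) := by rw [siteOp_mul_same _ _ _ ha, mp_eq]
      _ = (P b * M b) * siteOp N mM a := by
          rw [siteOp_comm _ _ ha hb hab, ← mul_assoc]
      _ = Y * U := by
          rw [siteOp_mul_same _ _ _ hb, pm_eq,
            siteOp_comm _ _ hb ha (Ne.symm hab)]
  rw [e1, e2]
  have hZa : siteOp N pauliZ a = X - Y := by
    rw [z_eq, siteOp_eq _ a ha, siteOp'_sub, ← siteOp_eq _ a ha, ← siteOp_eq _ a ha]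
  have hZb : siteOp N pauliZ b = U - V := by
    rw [z_eq, siteOp_eq _ b hb, siteOp'_sub, ← siteOp_eq _ b hb, ← siteOp_eq _ b hb]
  have hone : (1 : Matrix (Fin N → Fin 2) (Fin N → Fin 2) ℂ) = (X + Y) * (U + V) := by
    have ha1 : X + Y = 1 := siteOp_nm_sum ha
    have hb1 : U + V = 1 := siteOp_nm_sum hb
    rw [ha1, hb1, one_mul]
  rw [hZa, hZb, hone]
  have key : (X + Y) * (U + V) - (X - Y) * (U - V) = (2 : ℂ) • (X * V + Y * U) := by
    rw [two_smul]
    noncomm_ring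
  rw [key, smul_smul]
  norm_num

end SpinLoopAux

open SpinLoopAux in
/-- **Nested anticommutators of spin bonds along a closed path depend only on the
endpoints.** With bonds `b_k = σ⁺_{r_k} σ⁻_{r_{k+1}}` (`k = 1, …, q−1`) and closing bond
`b_q = σ⁺_{r_q} σ⁻_{r_1}`, the nested anticommutator `A_q = {…{{b₁,b₂},b₃}…,b_q}` equals
`(1/2)(1 − σ^z_{r_1} σ^z_{r_q})`, independently of the intermediate sites. -/
theorem spin_loop_nested_anticommutator (L q : ℕ) (hL : 2 ≤ L) (hq : 2 ≤ q) (hqL : q ≤ L)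
    (r : ℕ → ℕ)
    (hrange : ∀ k : ℕ, 1 ≤ k → k ≤ q → 1 ≤ r k ∧ r k ≤ L)
    (hdistinct : ∀ k l : ℕ, 1 ≤ k → k ≤ q → 1 ≤ l → l ≤ q → k ≠ l → r k ≠ r l) :
    List.foldl (fun A B => A * B + B * A)
      (siteOp L sigmaPlus (r 1) * siteOp L sigmaMinus (r 2))
      ((List.range (q - 1)).map fun k =>
        if k + 2 = q then siteOp L sigmaPlus (r q) * siteOp L sigmaMinus (r 1)
        else siteOp L sigmaPlus (r (k + 2)) * siteOp L sigmaMinus (r (k + 3)))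
      = ((1 : ℂ) / 2) • (1 - siteOp L pauliZ (r 1) * siteOp L pauliZ (r q)) := by
  -- the bond list function
  set f : ℕ → Matrix (Fin L → Fin 2) (Fin L → Fin 2) ℂ := fun k =>
    if k + 2 = q then siteOp L sigmaPlus (r q) * siteOp L sigmaMinus (r 1)
    else siteOp L sigmaPlus (r (k + 2)) * siteOp L sigmaMinus (r (k + 3)) with hf
  -- prefix lemma
  have prefix_fold : ∀ m : ℕ, m ≤ q - 2 →
      List.foldl (fun A B => A * B + B * A)
        (siteOp L sigmaPlus (r 1) * siteOp L sigmaMinus (r 2))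
        ((List.range m).map f)
      = siteOp L sigmaPlus (r 1) * siteOp L sigmaMinus (r (m + 2)) := by
    intro m
    induction m with
    | zero => intro _; simp
    | succ m ih =>
      intro hm
      have hm' : m ≤ q - 2 := by omega
      rw [List.range_succ, List.map_append, List.foldl_append, ih hm']
      simp only [List.map_cons, List.map_nil, List.foldl_cons, List.foldl_nil, hf]
      rw [if_neg (by omega : ¬ m + 2 = q)]
      exact chain (hrange 1 (by omega) (by omega)) (hrange (m + 2) (by omega) (by omega))
        (hrange (m + 3) (by omega) (by omega))
        (hdistinct 1 (m + 2) (by omega) (by omega) (by omega) (by omega) (by omega))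
        (hdistinct (m + 2) (m + 3) (by omega) (by omega) (by omega) (by omega) (by omega))
        (hdistinct 1 (m + 3) (by omega) (by omega) (by omega) (by omega) (by omega))
  have hq1 : q - 1 = (q - 2) + 1 := by omega
  rw [hq1, List.range_succ, List.map_append, List.foldl_append, prefix_fold (q - 2) le_rfl]
  have hq2 : q - 2 + 2 = q := by omega
  simp only [List.map_cons, List.map_nil, List.foldl_cons, List.foldl_nil, hf]
  rw [if_pos hq2, hq2]
  exact close (hrange 1 (by omega) (by omega)) (hrange q (by omega) (by omega))
    (hdistinct 1 q (by omega) (by omega) (by omega) (by omega) (by omega))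
end
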